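/- arXiv:2405.17593 — 4 statements merged into one kernel-verified Lean document; each statement's English description precedes it below -/
import Mathlib

section
/- Let S be a Sylow p-subgroup of a normal subgroup N of a finite group H. If γ : H → G is a surjective homomorphism with kernel N such that every proper subgroup of H has proper image in G, then S is normal in H. -/
namespace Subgroup

variable {H G : Type*} [Group H] [Group G]

theorem map_eq_top_of_sup_ker_eq_top {f : H →* G} (hf : Function.Surjective f) {K : Subgroup H}
    (hK : K ⊔ f.ker = ⊤) : K.map f = ⊤ := by
  rw [← sup_bot_eq (K.map f), ← (map_eq_bot_iff f.ker).mpr le_rfl, ← map_sup, hK,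
    map_top_of_surjective f hf]

theorem eq_top_of_sup_ker_eq_top {f : H →* G} (hf : Function.Surjective f)
    (hmin : ∀ K : Subgroup H, K < ⊤ → K.map f < ⊤) {K : Subgroup H} (hK : K ⊔ f.ker = ⊤) :
    K = ⊤ :=
  not_lt_top_iff.mp fun hlt => (hmin K hlt).ne (map_eq_top_of_sup_ker_eq_top hf hK)

end Subgroup

/-- Let `γ : H → G` be surjective with kernel `N`, with every proper
subgroup of `H` having proper image in `G`, and let `S` be a Sylow `p`-subgroup of
`N = ker γ`. Then `S` (as a subgroup of `H`) is normal in `H`. -/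
theorem stmt_2 {H G : Type*} [Group H] [Finite H] [Group G]
    (γ : H →* G) (hsurj : Function.Surjective γ)
    (hmin : ∀ K : Subgroup H, K < ⊤ → Subgroup.map γ K < ⊤)
    (p : ℕ) [Fact p.Prime] (S : Sylow p γ.ker) :
    (Subgroup.map γ.ker.subtype (S : Subgroup γ.ker)).Normal := by
  rw [← Subgroup.normalizer_eq_top_iff]
  -- Frattini argument: `N_H(S) ⊔ ker γ = H`.
  exact Subgroup.eq_top_of_sup_ker_eq_top hsurj hmin (Sylow.normalizer_sup_eq_top S)
end

section
/- Let H be a subdirect product of H₁ × H₂ with projections π₁, π₂, and let N be a soluble normal subgroup of H such that H/N ≅ T^ℓ for a finite nonabelian simple group T and positive integer ℓ. Then there exist integers ℓ₁, ℓ₂ ≥ 0 with ℓ₁ + ℓ₂ ≥ ℓ such that H₁/(Nπ₁) ≅ T^{ℓ₁} and H₂/(Nπ₂) ≅ T^{ℓ₂}. -/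
/-!
Let `Kᵢ = ker πᵢ`. Then `Hᵢ/Nπᵢ ≅ H/NKᵢ ≅ T^ℓ/ψ(Kᵢ)`. A normal subgroup of `T^ℓ` consists of
exactly the tuples that are trivial off its support (the coordinates where some element of it is
nontrivial): commutators with elements supported at one coordinate reach all of `T` there. Hence
`Hᵢ/Nπᵢ ≅ T^{ℓ - |Sᵢ|}`, where `Sᵢ` is the support of `ψ(Kᵢ)`. Since `K₁` and `K₂` commute
elementwise and `T` is nonabelian, `S₁` and `S₂` are disjoint, so `ℓ₁ + ℓ₂ ≥ ℓ`.
-/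

open Subgroup
open scoped commutatorElement

section

variable {T : Type*} [Group T]

theorem IsSimpleGroup.center_eq_bot (hT : IsSimpleGroup T) (hTna : ∃ a b : T, a * b ≠ b * a) :
    center T = ⊥ := by
  obtain ⟨a, b, hab⟩ := hTna
  exact (hT.eq_bot_or_eq_top_of_normal _ inferInstance).resolve_right fun h =>
    hab (mem_center_iff.mp (h ▸ mem_top b) a)

section Pi

variable {ι : Type*}

open scoped Classical in
noncomputable def Subgroup.coordSupport [Fintype ι] (A : Subgroup (ι → T)) : Finset ι :=
  {i | ∃ a ∈ A, a i ≠ 1}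

theorem Subgroup.mem_coordSupport [Fintype ι] {A : Subgroup (ι → T)} {i : ι} :
    i ∈ A.coordSupport ↔ ∃ a ∈ A, a i ≠ 1 := by
  classical
  simp [coordSupport]

variable [DecidableEq ι]

theorem Subgroup.Normal.mulSingle_mem (hT : IsSimpleGroup T)
    (hTna : ∃ a b : T, a * b ≠ b * a) {A : Subgroup (ι → T)} (hA : A.Normal)
    {a : ι → T} (ha : a ∈ A) {i : ι} (hai : a i ≠ 1) (t : T) : Pi.mulSingle i t ∈ A := by
  obtain ⟨g, hg⟩ : ∃ g, g * a i ≠ a i * g := by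
    by_contra! h
    exact hai (mem_bot.mp (hT.center_eq_bot hTna ▸ mem_center_iff.mpr h))
  -- `⁅mulSingle i g, a⁆ = mulSingle i ⁅g, a i⁆` is a nontrivial element of `A` supported at `i`
  have hcomm : ⁅g, a i⁆ ∈ A.comap (MonoidHom.mulSingle (fun _ => T) i) := by
    have heq : Pi.mulSingle i ⁅g, a i⁆ = ⁅(Pi.mulSingle i g : ι → T), a⁆ := by
      ext j
      rcases eq_or_ne j i with rfl | hji
      · simp [commutatorElement_def]
      · simp [commutatorElement_def, Pi.mulSingle_eq_of_ne hji]
    rw [mem_comap, MonoidHom.mulSingle_apply, heq, commutatorElement_def]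
    exact mul_mem (hA.conj_mem a ha _) (inv_mem ha)
  have htop : A.comap (MonoidHom.mulSingle (fun _ => T) i) = ⊤ := by
    refine (hT.eq_bot_or_eq_top_of_normal _ (hA.comap _)).resolve_left fun hbot => hg ?_
    rw [hbot, mem_bot, commutatorElement_eq_one_iff_mul_comm] at hcomm
    exact hcomm
  exact eq_top_iff.mp htop (mem_top t)

variable [Fintype ι]

theorem Subgroup.Normal.mem_iff_forall_notMem_coordSupport (hT : IsSimpleGroup T)
    (hTna : ∃ a b : T, a * b ≠ b * a) {A : Subgroup (ι → T)} (hA : A.Normal) {x : ι → T} :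
    x ∈ A ↔ ∀ i ∉ A.coordSupport, x i = 1 := by
  classical
  refine ⟨fun hx i hi => ?_, fun hx => pi_mem_of_mulSingle_mem x fun i => ?_⟩
  · by_contra hxi
    exact hi (mem_coordSupport.mpr ⟨x, hx, hxi⟩)
  · by_cases hi : i ∈ A.coordSupport
    · obtain ⟨a, ha, hai⟩ := mem_coordSupport.mp hi
      exact hA.mulSingle_mem hT hTna ha hai (x i)
    · simp [hx i hi, one_mem]

theorem Subgroup.Normal.exists_surjective_ker_eq (hT : IsSimpleGroup T)
    (hTna : ∃ a b : T, a * b ≠ b * a) {A : Subgroup (ι → T)} (hA : A.Normal) :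
    ∃ r : (ι → T) →* (Fin A.coordSupportᶜ.card → T), Function.Surjective r ∧ r.ker = A := by
  let e : Fin A.coordSupportᶜ.card ≃ (A.coordSupportᶜ : Finset ι) :=
    A.coordSupportᶜ.equivFin.symm
  let r : (ι → T) →* (Fin A.coordSupportᶜ.card → T) :=
    MonoidHom.pi fun j => Pi.evalMonoidHom (fun _ : ι => T) (e j : ι)
  have he : Function.Injective fun j => (e j : ι) := Subtype.val_injective.comp e.injective
  refine ⟨r, fun y => he.surjective_comp_right y, ?_⟩
  ext x
  rw [MonoidHom.mem_ker, hA.mem_iff_forall_notMem_coordSupport hT hTna, funext_iff,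
    e.forall_congr_left]
  simp [r]

theorem Subgroup.Normal.disjoint_coordSupport_of_commute (hT : IsSimpleGroup T)
    (hTna : ∃ a b : T, a * b ≠ b * a) {A B : Subgroup (ι → T)} (hA : A.Normal) (hB : B.Normal)
    (hAB : ∀ a ∈ A, ∀ b ∈ B, Commute a b) : Disjoint A.coordSupport B.coordSupport := by
  refine Finset.disjoint_left.mpr fun i hiA hiB => ?_
  obtain ⟨a, ha, hai⟩ := mem_coordSupport.mp hiA
  obtain ⟨b, hb, hbi⟩ := mem_coordSupport.mp hiB
  have ⟨s, t, hst⟩ := hTna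
  have hcomm := hAB _ (hA.mulSingle_mem hT hTna ha hai s) _ (hB.mulSingle_mem hT hTna hb hbi t)
  exact hst (by simpa using congrFun hcomm.eq i)

end Pi

theorem MonoidHom.ker_eq_map_ker_comp {G G₁ Q : Type*} [Group G] [Group G₁] [Group Q]
    {π : G →* G₁} (hπ : Function.Surjective π) (φ : G₁ →* Q) :
    φ.ker = (φ.comp π).ker.map π := by
  rw [← MonoidHom.comap_ker, map_comap_eq_self_of_surjective hπ]

theorem exists_surjective_pi_ker_eq_map {ι G G₁ : Type*} [Fintype ι] [DecidableEq ι] [Group G]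
    [Group G₁] (hT : IsSimpleGroup T) (hTna : ∃ a b : T, a * b ≠ b * a)
    {π : G →* G₁} (hπ : Function.Surjective π) {ψ : G →* (ι → T)} (hψ : Function.Surjective ψ) :
    ∃ φ : G₁ →* (Fin (π.ker.map ψ).coordSupportᶜ.card → T),
      Function.Surjective φ ∧ φ.ker = ψ.ker.map π := by
  obtain ⟨r, hr, hker⟩ := (π.normal_ker.map ψ hψ).exists_surjective_ker_eq hT hTna
  have hρ : (r.comp ψ).ker = π.ker ⊔ ψ.ker := by
    rw [← MonoidHom.comap_ker, hker, comap_map_eq]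
  let φ := π.liftOfSurjective hπ ⟨r.comp ψ, hρ ▸ le_sup_left⟩
  have hφ : φ.comp π = r.comp ψ := π.liftOfRightInverse_comp _ _ _
  refine ⟨φ, .of_comp (hφ ▸ hr.comp hψ : Function.Surjective (φ.comp π)), ?_⟩
  rw [MonoidHom.ker_eq_map_ker_comp hπ, hφ, hρ, Subgroup.map_sup,
    (Subgroup.map_eq_bot_iff π.ker).mpr le_rfl, bot_sup_eq]

end

theorem Finset.card_le_card_compl_add_card_compl {ι : Type*} [Fintype ι] [DecidableEq ι]
    {s t : Finset ι} (hst : Disjoint s t) : Fintype.card ι ≤ sᶜ.card + tᶜ.card := by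
  calc Fintype.card ι = (sᶜ ∪ tᶜ).card := by
        rw [← compl_inter, disjoint_iff_inter_eq_empty.mp hst, compl_empty, card_univ]
    _ ≤ sᶜ.card + tᶜ.card := card_union_le _ _

theorem Subgroup.commute_of_mem_ker_fst_of_mem_ker_snd {H₁ H₂ : Type*} [Group H₁] [Group H₂]
    {H : Subgroup (H₁ × H₂)} {k k' : H} (hk : k ∈ ((MonoidHom.fst H₁ H₂).comp H.subtype).ker)
    (hk' : k' ∈ ((MonoidHom.snd H₁ H₂).comp H.subtype).ker) : Commute k k' := by
  rw [MonoidHom.mem_ker] at hk hk'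
  exact Subtype.ext (Prod.ext (by simp_all) (by simp_all))

theorem stmt_4_general {H₁ H₂ T : Type*} [Group H₁] [Group H₂] [Group T]
    (hT : IsSimpleGroup T) (hTna : ∃ a b : T, a * b ≠ b * a)
    (H : Subgroup (H₁ × H₂))
    (π₁ : ↥H →* H₁) (π₂ : ↥H →* H₂)
    (hπ₁ : π₁ = (MonoidHom.fst H₁ H₂).comp H.subtype)
    (hπ₂ : π₂ = (MonoidHom.snd H₁ H₂).comp H.subtype)
    (hs1 : Function.Surjective π₁) (hs2 : Function.Surjective π₂)
    (N : Subgroup ↥H)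
    (ℓ : ℕ)
    (ψ : ↥H →* (Fin ℓ → T)) (hψ : Function.Surjective ψ) (hkerψ : ψ.ker = N) :
    ∃ ℓ₁ ℓ₂ : ℕ, ℓ₁ + ℓ₂ ≥ ℓ ∧
      (∃ φ₁ : H₁ →* (Fin ℓ₁ → T), Function.Surjective φ₁ ∧ φ₁.ker = Subgroup.map π₁ N) ∧
      (∃ φ₂ : H₂ →* (Fin ℓ₂ → T), Function.Surjective φ₂ ∧ φ₂.ker = Subgroup.map π₂ N) := by
  subst hkerψ
  obtain ⟨φ₁, hφ₁, hker₁⟩ := exists_surjective_pi_ker_eq_map hT hTna hs1 hψ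
  obtain ⟨φ₂, hφ₂, hker₂⟩ := exists_surjective_pi_ker_eq_map hT hTna hs2 hψ
  have hdisj : Disjoint (π₁.ker.map ψ).coordSupport (π₂.ker.map ψ).coordSupport := by
    refine ((π₁.normal_ker.map ψ hψ).disjoint_coordSupport_of_commute hT hTna
      (π₂.normal_ker.map ψ hψ)) ?_
    rintro _ ⟨k, hk, rfl⟩ _ ⟨k', hk', rfl⟩
    subst hπ₁ hπ₂
    exact (commute_of_mem_ker_fst_of_mem_ker_snd hk hk').map ψ
  refine ⟨_, _, ?_, ⟨φ₁, hφ₁, hker₁⟩, ⟨φ₂, hφ₂, hker₂⟩⟩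
  simpa using Finset.card_le_card_compl_add_card_compl hdisj

/-- Let `H ≤ H₁ × H₂` be a subdirect product with projections `π₁, π₂`,
and `N` a soluble normal subgroup of `H` with `H/N ≅ T^ℓ` for a finite nonabelian simple
group `T` and `ℓ ≥ 1`. Then there are `ℓ₁, ℓ₂ ≥ 0` with `ℓ₁ + ℓ₂ ≥ ℓ` such that
`H₁/(Nπ₁) ≅ T^{ℓ₁}` and `H₂/(Nπ₂) ≅ T^{ℓ₂}` (expressed via surjective homomorphisms
`Hᵢ → T^{ℓᵢ}` with kernel exactly `Nπᵢ`). -/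
theorem stmt_4 {H₁ H₂ T : Type*} [Group H₁] [Group H₂] [Group T] [Finite T]
    [Finite H₁] [Finite H₂]
    (hT : IsSimpleGroup T) (hTna : ∃ a b : T, a * b ≠ b * a)
    (H : Subgroup (H₁ × H₂))
    (π₁ : ↥H →* H₁) (π₂ : ↥H →* H₂)
    (hπ₁ : π₁ = (MonoidHom.fst H₁ H₂).comp H.subtype)
    (hπ₂ : π₂ = (MonoidHom.snd H₁ H₂).comp H.subtype)
    (hs1 : Function.Surjective π₁) (hs2 : Function.Surjective π₂)
    (N : Subgroup ↥H) (hN : N.Normal) (hsol : IsSolvable N)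
    (ℓ : ℕ) (hℓ : 1 ≤ ℓ)
    (ψ : ↥H →* (Fin ℓ → T)) (hψ : Function.Surjective ψ) (hkerψ : ψ.ker = N) :
    ∃ ℓ₁ ℓ₂ : ℕ, ℓ₁ + ℓ₂ ≥ ℓ ∧
      (∃ φ₁ : H₁ →* (Fin ℓ₁ → T), Function.Surjective φ₁ ∧ φ₁.ker = Subgroup.map π₁ N) ∧
      (∃ φ₂ : H₂ →* (Fin ℓ₂ → T), Function.Surjective φ₂ ∧ φ₂.ker = Subgroup.map π₂ N) :=
  stmt_4_general hT hTna H π₁ π₂ hπ₁ hπ₂ hs1 hs2 N ℓ ψ hψ hkerψ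
end

section
/- Let r be a prime and R a finite nonabelian r-group all of whose proper characteristic subgroups are cyclic and central. Then R has center cyclic of order r or 4, R/Z(R) is elementary abelian, and the commutator map induces a nondegenerate-up-to-radical alternating form on R/Z(R) over 𝔽_r; in particular R is of symplectic type (extraspecial, or a central product of an extraspecial 2-group with a cyclic group of order 4). -/
/-!
The subgroup `R ^ r [R, R]` is characteristic and proper, hence central: `R` has class two,
commutators have order `r` and `R / Z(R)` has exponent `r`. A characteristic subgroup `K` with
cyclic quotient `R / K` must be all of `R`, for otherwise `K ≤ Z(R)` and `R` would be abelian.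
Applied to the kernel of `x ↦ x ^ r [R, R]`, whose image lies in the cyclic image of `Z(R)`, this
gives `R ^ r ≤ [R, R]`, a group of order `r`; for odd `r`, where `x ↦ x ^ r` is a homomorphism,
it gives exponent `r`. Hence `|Z(R)| = r`, or `r = 2` and `|Z(R)| = 4`. In the last case a
complement of `Z(R) / [R, R]` in the elementary abelian group `R / [R, R]` pulls back to an
extraspecial `E` with `E Z(R) = R`.
-/

/-- An extraspecial `p`-group: a `p`-group whose center has order `p`, equals the derived
subgroup, and whose central quotient is elementary abelian (exponent `p`). -/
def IsExtraspecial (p : ℕ) (R : Type*) [Group R] : Prop :=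
  IsPGroup p R ∧ Nat.card (Subgroup.center R) = p ∧ Subgroup.center R = commutator R ∧
    ∀ x : R ⧸ Subgroup.center R, x ^ p = 1

/-- A `p`-group of symplectic type: extraspecial, or (for `p = 2`) a central product of an
extraspecial `2`-group with a cyclic group of order `4`. -/
def IsSymplecticType (p : ℕ) (R : Type*) [Group R] : Prop :=
  IsExtraspecial p R ∨
    (p = 2 ∧ IsCyclic (Subgroup.center R) ∧ Nat.card (Subgroup.center R) = 4 ∧
      ∃ E : Subgroup R, IsExtraspecial 2 ↥E ∧ E ⊔ Subgroup.center R = ⊤)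

open scoped commutatorElement
open Subgroup

section CommutatorCentral

variable {G : Type*} [Group G]

theorem mul_eq_commutatorElement_mul (x y : G) : y * x = ⁅y, x⁆ * (x * y) := by
  rw [commutatorElement_def]; group

theorem pow_mul_eq_commutatorElement_pow_mul {x y : G} (h : ⁅y, x⁆ ∈ center G) (n : ℕ) :
    y ^ n * x = ⁅y, x⁆ ^ n * (x * y ^ n) := by
  induction n with
  | zero => simp
  | succ n ih =>
    have hc : Commute y ⁅y, x⁆ := mem_center_iff.mp h y
    calc y ^ (n + 1) * x = y * (y ^ n * x) := by rw [pow_succ', mul_assoc]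
      _ = ⁅y, x⁆ ^ n * (y * x) * y ^ n := by
        rw [ih, ← mul_assoc, (hc.pow_right n).eq]; simp only [mul_assoc]
      _ = ⁅y, x⁆ ^ (n + 1) * (x * y ^ (n + 1)) := by
        rw [mul_eq_commutatorElement_mul x y, pow_succ, pow_succ']; simp only [mul_assoc]

theorem commutatorElement_pow_left {x y : G} (h : ⁅x, y⁆ ∈ center G) (n : ℕ) :
    ⁅x ^ n, y⁆ = ⁅x, y⁆ ^ n := by
  rw [commutatorElement_def, pow_mul_eq_commutatorElement_pow_mul h]
  group

theorem mul_pow_eq_commutatorElement_pow_mul {x y : G} (h : ⁅y, x⁆ ∈ center G) (n : ℕ) :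
    (x * y) ^ n = ⁅y, x⁆ ^ n.choose 2 * (x ^ n * y ^ n) := by
  induction n with
  | zero => simp
  | succ n ih =>
    have hc : Commute x ⁅y, x⁆ := mem_center_iff.mp h x
    calc (x * y) ^ (n + 1) = ⁅y, x⁆ ^ n.choose 2 * x ^ n * (y ^ n * x) * y := by
          rw [pow_succ, ih]; simp only [mul_assoc]
      _ = ⁅y, x⁆ ^ n.choose 2 * (x ^ n * ⁅y, x⁆ ^ n) * x * y ^ (n + 1) := by
          rw [pow_mul_eq_commutatorElement_pow_mul h, pow_succ]; simp only [mul_assoc]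
      _ = ⁅y, x⁆ ^ (n.choose 2 + n) * (x ^ (n + 1) * y ^ (n + 1)) := by
          rw [(hc.pow_pow n n).eq, pow_add ⁅y, x⁆, pow_succ x n]; simp only [mul_assoc]
      _ = ⁅y, x⁆ ^ (n + 1).choose 2 * (x ^ (n + 1) * y ^ (n + 1)) := by
          rw [Nat.choose_succ_succ', Nat.choose_one_right, Nat.add_comm n (n.choose _)]

end CommutatorCentral

section GroupFacts

variable {G : Type*} [Group G]

theorem Subgroup.card_dvd_of_isCyclic (H : Subgroup G) [IsCyclic H] {n : ℕ}
    (h : ∀ x ∈ H, x ^ n = 1) : Nat.card H ∣ n :=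
  IsCyclic.exponent_eq_card (α := H) ▸
    Monoid.exponent_dvd_of_forall_pow_eq_one fun x => Subtype.ext (h x x.2)

theorem Subgroup.card_eq_of_isCyclic_of_pow_prime_eq_one (H : Subgroup G) [IsCyclic H]
    (hH : H ≠ ⊥) {p : ℕ} (hp : p.Prime) (h : ∀ x ∈ H, x ^ p = 1) : Nat.card H = p :=
  (hp.eq_one_or_self_of_dvd _ (H.card_dvd_of_isCyclic h)).resolve_left (mt card_eq_one.mp hH)

theorem QuotientGroup.pow_eq_one_of_forall_pow_mem {N : Subgroup G} [N.Normal] {n : ℕ}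
    (h : ∀ g : G, g ^ n ∈ N) (x : G ⧸ N) : x ^ n = 1 := by
  induction x using QuotientGroup.induction_on with
  | H g => rw [← QuotientGroup.mk_pow, QuotientGroup.eq_one_iff]; exact h g

theorem isExtraspecial_of_card_center [Finite G] {p : ℕ} (hp : IsPGroup p G) (hpp : p.Prime)
    (hZ : Nat.card (center G) = p) (hle : commutator G ≤ center G) (hne : commutator G ≠ ⊥)
    (hpow : ∀ g : G, g ^ p ∈ center G) : IsExtraspecial p G := by
  have hcard : Nat.card (commutator G) = p :=
    (hpp.eq_one_or_self_of_dvd _ (hZ ▸ card_dvd_of_le hle)).resolve_left (mt card_eq_one.mp hne)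
  exact ⟨hp, hZ, (eq_of_le_of_card_ge hle (by rw [hZ, hcard])).symm,
    QuotientGroup.pow_eq_one_of_forall_pow_mem hpow⟩

theorem Subgroup.center_eq_subgroupOf_of_sup_center_eq_top {E : Subgroup G}
    (h : E ⊔ center G = ⊤) : center E = (center G).subgroupOf E := by
  refine le_antisymm (fun x hx => ?_) (fun x hx => ?_)
  · have hle : E ⊔ center G ≤ centralizer {(x : G)} := by
      refine sup_le (fun e he => ?_) (fun z hz => ?_) <;>
        rw [mem_centralizer_singleton_iff]
      · exact congrArg Subtype.val (mem_center_iff.mp hx ⟨e, he⟩)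
      · exact (mem_center_iff.mp hz x).symm
    rw [mem_subgroupOf, mem_center_iff]
    intro g
    exact mem_centralizer_singleton_iff.mp (hle (h ▸ mem_top g))
  · rw [mem_subgroupOf, mem_center_iff] at hx
    exact mem_center_iff.mpr fun g => Subtype.ext (hx g)

theorem Subgroup.complementedLattice_of_pow_eq_one {W : Type*} [CommGroup W] {p : ℕ}
    [Fact p.Prime] (hW : ∀ w : W, w ^ p = 1) : ComplementedLattice (Subgroup W) :=
  letI : Module (ZMod p) (Additive W) := AddCommGroup.zmodModule fun w => hW w.toMul
  (Subgroup.toAddSubgroup.trans (AddSubgroup.toZModSubmodule p)).symm.complementedLattice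

end GroupFacts

section PowCommutator

/-- `R ^ r [R, R]`; for a finite `r`-group `R` this is the Frattini subgroup. -/
def powCommutator (r : ℕ) (R : Type*) [Group R] : Subgroup R :=
  (powMonoidHom r : Abelianization R →* Abelianization R).range.comap Abelianization.of

variable {R : Type*} [Group R] {r : ℕ}

theorem pow_mem_powCommutator (x : R) : x ^ r ∈ powCommutator r R :=
  ⟨Abelianization.of x, (map_pow _ x r).symm⟩

theorem commutatorElement_mem_powCommutator (x y : R) : ⁅x, y⁆ ∈ powCommutator r R := by
  rw [powCommutator, mem_comap, map_commutatorElement,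
    commutatorElement_eq_one_iff_mul_comm.mpr (mul_comm _ _)]
  exact one_mem _

instance powCommutator_characteristic : (powCommutator r R).Characteristic := by
  refine characteristic_iff_map_le.mpr fun φ => ?_
  rintro _ ⟨x, ⟨y, hy⟩, rfl⟩
  refine ⟨Abelianization.map φ.toMonoidHom y, ?_⟩
  rw [powMonoidHom_apply, ← map_pow, ← powMonoidHom_apply, hy, Abelianization.map_of]

theorem IsPGroup.powCommutator_ne_top [Finite R] [Nontrivial R] [Fact r.Prime]
    (hp : IsPGroup r R) : powCommutator r R ≠ ⊤ := by
  -- Otherwise the `r`-th power map of the nontrivial `r`-group `R / [R, R]` is surjective, hence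
  -- injective, yet it kills an element of order `r`.
  intro htop
  have hsurj : Function.Surjective (powMonoidHom r : Abelianization R →* _) := fun a => by
    obtain ⟨x, rfl⟩ := QuotientGroup.mk_surjective a
    exact (htop ▸ mem_top x : x ∈ powCommutator r R)
  have hinj : Function.Injective (powMonoidHom r : Abelianization R →* _) :=
    Finite.injective_iff_surjective.mpr hsurj
  have := hp.isNilpotent
  obtain ⟨x, hx⟩ : ∃ x : R, x ∉ commutator R :=
    SetLike.exists_not_mem_of_ne_top _ (Group.IsSolvable.commutator_lt_top_of_nontrivial R).ne
  have : Nontrivial (Abelianization R) :=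
    ⟨⟨Abelianization.of x, 1, mt (QuotientGroup.eq_one_iff x).mp hx⟩⟩
  obtain ⟨a, ha⟩ := exists_prime_orderOf_dvd_card' (G := Abelianization R) r <|
    (hp.of_surjective Abelianization.of QuotientGroup.mk_surjective).card_eq_or_dvd.resolve_left
      Finite.one_lt_card.ne'
  have : a = 1 := hinj (by rw [map_one, powMonoidHom_apply, ← ha, pow_orderOf_eq_one])
  exact (Fact.out : r.Prime).one_lt.ne (by rw [← ha, this, orderOf_one])

end PowCommutator

section CentralProduct

variable {G : Type*} [Group G] {p : ℕ}

theorem exists_sup_center_eq_top_inf_center_eq_commutator [Fact p.Prime]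
    (hpow : ∀ x : G, x ^ p ∈ commutator G) (hle : commutator G ≤ center G) :
    ∃ E : Subgroup G, E ⊔ center G = ⊤ ∧ E ⊓ center G = commutator G := by
  have := complementedLattice_of_pow_eq_one (W := Abelianization G) (p := p) fun w => by
    obtain ⟨x, rfl⟩ := QuotientGroup.mk_surjective w
    exact (QuotientGroup.eq_one_iff _).mpr (hpow x)
  obtain ⟨U, hU⟩ := exists_isCompl ((center G).map Abelianization.of)
  have hker : commutator G ≤ U.comap Abelianization.of := by
    rw [← Abelianization.ker_of]; exact MonoidHom.ker_le_comap _ U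
  refine ⟨U.comap Abelianization.of, ?_,
    le_antisymm (fun x ⟨hxU, hxZ⟩ => ?_) (le_inf hker hle)⟩
  · have h := comap_map_eq Abelianization.of (U.comap Abelianization.of ⊔ center G)
    rwa [Subgroup.map_sup, map_comap_eq_self_of_surjective QuotientGroup.mk_surjective,
      hU.symm.sup_eq_top, comap_top, Abelianization.ker_of,
      sup_eq_left.mpr (hker.trans le_sup_left), eq_comm] at h
  · have h : Abelianization.of x ∈ (center G).map Abelianization.of ⊓ U :=
      ⟨mem_map_of_mem _ hxZ, hxU⟩
    rw [hU.inf_eq_bot, mem_bot, ← MonoidHom.mem_ker, Abelianization.ker_of] at h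
    exact h

theorem isExtraspecial_of_sup_center_eq_top [Finite G] (hp : IsPGroup p G) (hpp : p.Prime)
    {E : Subgroup G} (hsup : E ⊔ center G = ⊤) (hinf : E ⊓ center G = commutator G)
    (hcard : Nat.card (commutator G) = p) (hpow : ∀ x : G, x ^ p ∈ commutator G)
    (hZ : center G ≠ ⊤) : IsExtraspecial p E := by
  have hDE : commutator G ≤ E := hinf ▸ inf_le_left
  have hcenter : center E = (commutator G).subgroupOf E := by
    rw [center_eq_subgroupOf_of_sup_center_eq_top hsup, ← hinf, inf_subgroupOf_left]
  have hne : commutator E ≠ ⊥ := by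
    rw [Ne, commutator_eq_bot_iff_center_eq_top, hcenter, subgroupOf_eq_top]
    intro hED
    exact hZ (by rw [← hsup, sup_eq_right.mpr (hED.trans (hinf ▸ inf_le_right))])
  refine isExtraspecial_of_card_center (hp.to_subgroup E) hpp ?_ ?_ hne fun e => ?_
  · rw [hcenter, Nat.card_congr (subgroupOfEquivOfLe hDE).toEquiv, hcard]
  · rw [commutator_eq_closure, closure_le, hcenter]
    rintro _ ⟨e, f, rfl⟩
    rw [SetLike.mem_coe, mem_subgroupOf, ← E.coe_subtype, map_commutatorElement]
    exact commutator_mem_commutator (mem_top _) (mem_top _)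
  · rw [hcenter, mem_subgroupOf, E.coe_pow]
    exact hpow e

end CentralProduct

def ProperCharacteristicCyclicCentral (R : Type*) [Group R] : Prop :=
  ∀ C : Subgroup R, C.Characteristic → C < ⊤ → IsCyclic C ∧ C ≤ center R

namespace ProperCharacteristicCyclicCentral

variable {R : Type*} [Group R]

theorem isCyclic_center (hR : ProperCharacteristicCyclicCentral R) (hZ : center R ≠ ⊤) :
    IsCyclic (center R) :=
  (hR _ centerCharacteristic hZ.lt_top).1

theorem ker_eq_top (hR : ProperCharacteristicCyclicCentral R) (hZ : center R ≠ ⊤)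
    {H : Type*} [Group H] (f : R →* H) (hcyc : IsCyclic f.range) (hchar : f.ker.Characteristic) :
    f.ker = ⊤ := by
  by_contra hne
  have hle := (hR _ hchar (lt_top_iff_ne_top.mpr hne)).2
  have := f.rangeRestrict.isMulCommutative_of_isCyclic_of_ker_le_center
    (by rwa [MonoidHom.ker_rangeRestrict])
  exact hZ center_eq_top

variable [Finite R] {r : ℕ} [Fact r.Prime]

theorem powCommutator_le_center (hR : ProperCharacteristicCyclicCentral R) (hZ : center R ≠ ⊤)
    (hp : IsPGroup r R) : powCommutator r R ≤ center R := by
  obtain ⟨x, hx⟩ := SetLike.exists_not_mem_of_ne_top _ hZ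
  have := nontrivial_of_ne x 1 fun h => hx (h ▸ one_mem _)
  exact (hR _ inferInstance hp.powCommutator_ne_top.lt_top).2

theorem pow_mem_center (hR : ProperCharacteristicCyclicCentral R) (hZ : center R ≠ ⊤)
    (hp : IsPGroup r R) (x : R) : x ^ r ∈ center R :=
  hR.powCommutator_le_center hZ hp (pow_mem_powCommutator x)

theorem commutatorElement_mem_center (hR : ProperCharacteristicCyclicCentral R)
    (hZ : center R ≠ ⊤) (hp : IsPGroup r R) (x y : R) : ⁅x, y⁆ ∈ center R :=
  hR.powCommutator_le_center hZ hp (commutatorElement_mem_powCommutator x y)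

theorem commutator_le_center (hR : ProperCharacteristicCyclicCentral R) (hZ : center R ≠ ⊤)
    (hp : IsPGroup r R) : commutator R ≤ center R := by
  rw [commutator_eq_closure, closure_le]
  rintro _ ⟨x, y, rfl⟩
  exact hR.commutatorElement_mem_center hZ hp x y

theorem isCyclic_commutator (hR : ProperCharacteristicCyclicCentral R) (hZ : center R ≠ ⊤)
    (hp : IsPGroup r R) : IsCyclic (commutator R) :=
  (hR _ inferInstance ((hR.commutator_le_center hZ hp).trans_lt hZ.lt_top)).1

theorem commutatorElement_pow_eq_one (hR : ProperCharacteristicCyclicCentral R)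
    (hZ : center R ≠ ⊤) (hp : IsPGroup r R) (x y : R) : ⁅x, y⁆ ^ r = 1 := by
  rw [← commutatorElement_pow_left (hR.commutatorElement_mem_center hZ hp x y),
    commutatorElement_eq_one_iff_mul_comm]
  exact (mem_center_iff.mp (hR.pow_mem_center hZ hp x) y).symm

theorem pow_eq_one_of_mem_commutator (hR : ProperCharacteristicCyclicCentral R)
    (hZ : center R ≠ ⊤) (hp : IsPGroup r R) {d : R} (hd : d ∈ commutator R) : d ^ r = 1 := by
  have hcentral : ∀ a ∈ closure (commutatorSet R), a ∈ center R := fun a ha =>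
    hR.commutator_le_center hZ hp (commutator_eq_closure R ▸ ha)
  rw [commutator_eq_closure] at hd
  induction hd using closure_induction with
  | mem _ h =>
    obtain ⟨x, y, rfl⟩ := h
    exact hR.commutatorElement_pow_eq_one hZ hp x y
  | one => exact one_pow r
  | mul a b ha _ iha ihb =>
    rw [Commute.mul_pow (mem_center_iff.mp (hcentral a ha) b).symm, iha, ihb, one_mul]
  | inv a _ iha => rw [inv_pow, iha, inv_one]

theorem card_commutator (hR : ProperCharacteristicCyclicCentral R) (hZ : center R ≠ ⊤)
    (hp : IsPGroup r R) : Nat.card (commutator R) = r := by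
  have := hR.isCyclic_commutator hZ hp
  exact card_eq_of_isCyclic_of_pow_prime_eq_one _ (mt (commutator_eq_bot_iff_center_eq_top R).mp hZ)
    Fact.out fun d hd => hR.pow_eq_one_of_mem_commutator hZ hp hd

theorem pow_mem_commutator (hR : ProperCharacteristicCyclicCentral R) (hZ : center R ≠ ⊤)
    (hp : IsPGroup r R) (x : R) : x ^ r ∈ commutator R := by
  let f : R →* Abelianization R := (powMonoidHom r).comp Abelianization.of
  have hker : ∀ y, y ∈ f.ker ↔ y ^ r ∈ commutator R := fun y => by
    rw [MonoidHom.mem_ker, MonoidHom.comp_apply, powMonoidHom_apply, ← map_pow]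
    exact QuotientGroup.eq_one_iff _
  have hchar : f.ker.Characteristic := characteristic_iff_comap_le.mpr fun φ y hy => by
    rw [mem_comap, hker, MulEquiv.coe_toMonoidHom, ← map_pow] at hy
    rw [hker, ← (characteristic_iff_comap_eq.mp inferInstance φ : (commutator R).comap _ = _)]
    exact hy
  have : IsCyclic ((center R).map Abelianization.of) :=
    have := hR.isCyclic_center hZ
    isCyclic_of_surjective _ (Abelianization.of.subgroupMap_surjective (center R))
  have hcyc : IsCyclic f.range := isCyclic_of_le (H' := (center R).map Abelianization.of) <| by
    rintro _ ⟨y, rfl⟩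
    exact ⟨y ^ r, hR.pow_mem_center hZ hp y, map_pow _ y r⟩
  exact (hker x).mp (hR.ker_eq_top hZ f hcyc hchar ▸ mem_top x)

theorem pow_eq_one_of_ne_two (hR : ProperCharacteristicCyclicCentral R) (hZ : center R ≠ ⊤)
    (hp : IsPGroup r R) (h2 : r ≠ 2) (x : R) : x ^ r = 1 := by
  have hr : r.Prime := Fact.out
  have hchoose : ∀ a b : R, ⁅b, a⁆ ^ r.choose 2 = 1 := fun a b => by
    obtain ⟨m, hm⟩ := hr.dvd_choose_self two_ne_zero (lt_of_le_of_ne hr.two_le h2.symm)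
    rw [hm, pow_mul, hR.commutatorElement_pow_eq_one hZ hp, one_pow]
  let f : R →* R :=
    { toFun := (· ^ r)
      map_one' := one_pow r
      map_mul' := fun a b => by
        rw [mul_pow_eq_commutatorElement_pow_mul (hR.commutatorElement_mem_center hZ hp b a),
          hchoose, one_mul] }
  have hchar : f.ker.Characteristic := characteristic_iff_comap_le.mpr fun φ y hy => by
    rw [mem_comap, MonoidHom.mem_ker, MulEquiv.coe_toMonoidHom] at hy
    exact (map_eq_one_iff φ φ.injective).mp ((map_pow φ y r).trans hy)
  have := hR.isCyclic_commutator hZ hp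
  have hcyc : IsCyclic f.range := isCyclic_of_le (H' := commutator R) <| by
    rintro _ ⟨y, rfl⟩
    exact hR.pow_mem_commutator hZ hp y
  exact (hR.ker_eq_top hZ f hcyc hchar ▸ mem_top x : x ∈ f.ker)

theorem card_center (hR : ProperCharacteristicCyclicCentral R) (hZ : center R ≠ ⊤)
    (hp : IsPGroup r R) : Nat.card (center R) = r ∨ r = 2 ∧ Nat.card (center R) = 4 := by
  have := hR.isCyclic_center hZ
  have hbot : center R ≠ ⊥ := fun h => (commutator_eq_bot_iff_center_eq_top R).not.mpr hZ
    (le_bot_iff.mp (h ▸ hR.commutator_le_center hZ hp))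
  obtain rfl | h2 := eq_or_ne r 2
  · have hdvd : Nat.card (center R) ∣ 2 ^ 2 := card_dvd_of_isCyclic _ fun z _ => by
      rw [sq, pow_mul]
      exact hR.pow_eq_one_of_mem_commutator hZ hp (hR.pow_mem_commutator hZ hp z)
    obtain ⟨k, hk, hcard⟩ := (Nat.dvd_prime_pow Nat.prime_two).mp hdvd
    interval_cases k
    · exact absurd (card_eq_one.mp hcard) hbot
    · exact Or.inl hcard
    · exact Or.inr ⟨rfl, hcard⟩
  · exact Or.inl (card_eq_of_isCyclic_of_pow_prime_eq_one _ hbot Fact.out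
      fun z _ => hR.pow_eq_one_of_ne_two hZ hp h2 z)

end ProperCharacteristicCyclicCentral

/-- Let `r` be a prime and `R` a finite nonabelian `r`-group all of whose
proper characteristic subgroups are cyclic and central. Then `Z(R)` is cyclic of order `r`
or `4`, `R/Z(R)` is elementary abelian (so commutators are central and of order dividing
`r`, giving the alternating commutator form on `R/Z(R)` over `𝔽_r`), and `R` is of
symplectic type. -/
theorem stmt_9 (r : ℕ) (hr : r.Prime) (R : Type*) [Group R] [Finite R]
    (hp : IsPGroup r R) (hna : ∃ a b : R, a * b ≠ b * a)
    (hchar : ∀ C : Subgroup R, C.Characteristic → C < ⊤ →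
      IsCyclic ↥C ∧ C ≤ Subgroup.center R) :
    (IsCyclic (Subgroup.center R) ∧
      (Nat.card (Subgroup.center R) = r ∨ Nat.card (Subgroup.center R) = 4)) ∧
    (∀ x y : R, ⁅x, y⁆ ∈ Subgroup.center R) ∧
    (∀ x : R ⧸ Subgroup.center R, x ^ r = 1) ∧
    (∀ x y : R, ⁅x, y⁆ ^ r = 1) ∧
    IsSymplecticType r R := by
  have := Fact.mk hr
  have hR : ProperCharacteristicCyclicCentral R := hchar
  have hZ : center R ≠ ⊤ := fun h =>
    let ⟨a, b, hab⟩ := hna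
    hab (mem_center_iff.mp (h ▸ mem_top b) a)
  have hcard := hR.card_center hZ hp
  refine ⟨⟨hR.isCyclic_center hZ, hcard.imp_right And.right⟩,
    hR.commutatorElement_mem_center hZ hp,
    QuotientGroup.pow_eq_one_of_forall_pow_mem (hR.pow_mem_center hZ hp),
    hR.commutatorElement_pow_eq_one hZ hp, ?_⟩
  rcases hcard with hcard | ⟨rfl, hcard⟩
  · exact Or.inl (isExtraspecial_of_card_center hp hr hcard (hR.commutator_le_center hZ hp)
      (mt (commutator_eq_bot_iff_center_eq_top R).mp hZ) (hR.pow_mem_center hZ hp))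
  · obtain ⟨E, hsup, hinf⟩ := exists_sup_center_eq_top_inf_center_eq_commutator
      (hR.pow_mem_commutator hZ hp) (hR.commutator_le_center hZ hp)
    exact Or.inr ⟨rfl, hR.isCyclic_center hZ, hcard, E,
      isExtraspecial_of_sup_center_eq_top hp hr hsup hinf (hR.card_commutator hZ hp)
        (hR.pow_mem_commutator hZ hp) hZ, hsup⟩
end

section
/- Let H ≤ H₁ × H₂ be a subdirect product with projections π₁, π₂ and kernels K₁ = ker π₁, K₂ = ker π₂, and let N be a normal subgroup of H. Suppose γ : H → H/N is the quotient map and that every proper subgroup of H has proper image under γ. Then for i ∈ {1,2}, every proper subgroup X < H/K_i has proper image in (H/K_i)/(NK_i/K_i) under the induced quotient map. -/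
/-!
A subgroup `X` has image all of `G ⧸ N` exactly when `X ⊔ N = ⊤`. If `f : G → G'` is
surjective and `X ⊔ f N = ⊤` in `G'`, then `f⁻¹ X ⊔ N` contains `ker f` and maps onto `G'`,
so it is all of `G`; hence `f⁻¹ X = ⊤` by the hypothesis on `N`, and `X = ⊤`. Applied to the
two coordinate projections of the subdirect product this gives the theorem.
-/

namespace Subgroup

variable {G G' : Type*} [Group G] [Group G']

theorem map_mk'_eq_top_iff (N : Subgroup G) [N.Normal] (X : Subgroup G) :
    X.map (QuotientGroup.mk' N) = ⊤ ↔ X ⊔ N = ⊤ := by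
  rw [← (QuotientGroup.mk' N).range_eq_top_of_surjective (QuotientGroup.mk'_surjective N),
    map_eq_range_iff, codisjoint_iff, QuotientGroup.ker_mk']

theorem comap_sup_eq_top_of_sup_map_eq_top {f : G →* G'} (hf : Function.Surjective f)
    {X : Subgroup G'} {N : Subgroup G} (h : X ⊔ N.map f = ⊤) : X.comap f ⊔ N = ⊤ := by
  have hker : f.ker ≤ X.comap f ⊔ N := (ker_le_comap f X).trans le_sup_left
  have hmap : (X.comap f ⊔ N).map f = ⊤ := by
    rw [map_sup, map_comap_eq_self_of_surjective hf, h]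
  rw [← comap_map_eq_self hker, hmap, comap_top]

theorem map_mk'_lt_top_of_surjective {f : G →* G'} (hf : Function.Surjective f)
    (N : Subgroup G) [N.Normal] [(N.map f).Normal]
    (hN : ∀ X : Subgroup G, X < ⊤ → X.map (QuotientGroup.mk' N) < ⊤) :
    ∀ X : Subgroup G', X < ⊤ → X.map (QuotientGroup.mk' (N.map f)) < ⊤ := by
  intro X hX
  have hcomap : X.comap f < ⊤ := by
    simpa only [comap_top] using (comap_lt_comap_of_surjective hf).2 hX
  have hNX := hN _ hcomap
  rw [lt_top_iff_ne_top, Ne, map_mk'_eq_top_iff] at hNX ⊢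
  exact fun hsup => hNX (comap_sup_eq_top_of_sup_map_eq_top hf hsup)

end Subgroup

/-- Let `H ≤ H₁ × H₂` be a subdirect product with projections
`π₁, π₂` and kernels `K₁, K₂`, and let `N ⊴ H`. If every proper subgroup of `H` has
proper image in `H/N`, then for `i ∈ {1,2}` every proper subgroup of `H/K_i ≅ H_i` has
proper image under the quotient map `H_i → H_i/(NK_i/K_i) = H_i/(Nπ_i)`. -/
theorem stmt_19 {H₁ H₂ : Type*} [Group H₁] [Group H₂] (H : Subgroup (H₁ × H₂))
    (hs1 : Function.Surjective ((MonoidHom.fst H₁ H₂).comp H.subtype))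
    (hs2 : Function.Surjective ((MonoidHom.snd H₁ H₂).comp H.subtype))
    (N : Subgroup ↥H) [N.Normal]
    (hmin : ∀ X : Subgroup ↥H, X < ⊤ → Subgroup.map (QuotientGroup.mk' N) X < ⊤)
    [h1 : (Subgroup.map ((MonoidHom.fst H₁ H₂).comp H.subtype) N).Normal]
    [h2 : (Subgroup.map ((MonoidHom.snd H₁ H₂).comp H.subtype) N).Normal] :
    (∀ X : Subgroup H₁, X < ⊤ →
      Subgroup.map (QuotientGroup.mk' (Subgroup.map ((MonoidHom.fst H₁ H₂).comp H.subtype) N)) X < ⊤) ∧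
    (∀ X : Subgroup H₂, X < ⊤ →
      Subgroup.map (QuotientGroup.mk' (Subgroup.map ((MonoidHom.snd H₁ H₂).comp H.subtype) N)) X < ⊤) :=
  ⟨Subgroup.map_mk'_lt_top_of_surjective hs1 N hmin,
    Subgroup.map_mk'_lt_top_of_surjective hs2 N hmin⟩
end
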